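/- Let (G, G_•) be a filtered group, let q_0, q_1: {0,1}^n → G, let k ≥ 1, and let ⟨q_0, q_1⟩_k: {0,1}^{n+k} → G be the k-arrow given by (v,w) ↦ q_0(v) if w ≠ 1^k and q_1(v) if w = 1^k. Then ⟨q_0, q_1⟩_k ∈ C^{n+k}(G_•) if and only if q_0 ∈ C^n(G_•) and the pointwise product q_0^{-1} q_1 lies in C^n(G_•^{+k}), where G_•^{+k} is the shifted filtration with i-th term G_{i+k}. -/

import Mathlib

open Finset

/-- Embedding of the discrete cube `{0,1}^n` into `ℤ^n`. -/
def cubeEmb {n : ℕ} (v : Fin n → Bool) : Fin n → ℤ := fun i => if v i then 1 else 0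

/-- A discrete-cube morphism: the restriction to `{0,1}^m` of an affine
homomorphism `ℤ^m → ℤ^n`. -/
def IsCubeMorphism {m n : ℕ} (φ : (Fin m → Bool) → (Fin n → Bool)) : Prop :=
  ∃ (M : (Fin m → ℤ) →+ (Fin n → ℤ)) (t : Fin n → ℤ),
    ∀ v : Fin m → Bool, cubeEmb (φ v) = M (cubeEmb v) + t

/-- A face of `{0,1}^n` of codimension `c`: fix `c` coordinates. -/
def IsFaceOfCodim {n : ℕ} (F : Set (Fin n → Bool)) (c : ℕ) : Prop :=
  ∃ (I : Finset (Fin n)) (x : Fin n → Bool), I.card = c ∧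
    F = {v : Fin n → Bool | ∀ i ∈ I, v i = x i}

/-- An `m`-face map into `{0,1}^n`: an injective cube morphism whose image is
an `m`-dimensional face. -/
def IsFaceMap {m n : ℕ} (φ : (Fin m → Bool) → (Fin n → Bool)) : Prop :=
  IsCubeMorphism φ ∧ Function.Injective φ ∧ IsFaceOfCodim (Set.range φ) (n - m)

/-- The number of coordinates of `v` equal to `1`. -/
def weight {n : ℕ} (v : Fin n → Bool) : ℕ := (Finset.univ.filter fun i => v i = true).card

/-- A (pre)filtration on a group: a decreasing chain of subgroups with
`[G_i, G_j] ⊆ G_{i+j}`. -/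
def IsHKFiltration {G : Type*} [Group G] (Gf : ℕ → Subgroup G) : Prop :=
  (∀ i, Gf (i + 1) ≤ Gf i) ∧
  (∀ i j : ℕ, ∀ x ∈ Gf i, ∀ y ∈ Gf j, x⁻¹ * y⁻¹ * x * y ∈ Gf (i + j))

open Classical in
/-- The face-group element `g^F`: equal to `g` on `F` and to the identity elsewhere. -/
noncomputable def faceEl {G : Type*} [Group G] {n : ℕ} (F : Set (Fin n → Bool)) (g : G) :
    (Fin n → Bool) → G :=
  fun v => if v ∈ F then g else 1

/-- The Host–Kra cube group `C^n(G_•)`: the subgroup of `G^{{0,1}^n}` generated by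
the face groups. -/
noncomputable def hkCubes {G : Type*} [Group G] (Gf : ℕ → Subgroup G) (n : ℕ) :
    Subgroup ((Fin n → Bool) → G) :=
  Subgroup.closure { f | ∃ (c : ℕ) (F : Set (Fin n → Bool)) (g : G),
    IsFaceOfCodim F c ∧ g ∈ Gf c ∧ f = faceEl F g }

/-- Restriction of a map on `{0,1}^{n+1}` to the lower face `{v : v_j = 0}`,
viewed as a map on `{0,1}^n`. -/
def lowerFaceRestr {X : Type*} {n : ℕ} (q : (Fin (n + 1) → Bool) → X) (j : Fin (n + 1)) :
    (Fin n → Bool) → X :=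
  fun v => q (j.insertNth false v)

/-- An `(n+1)`-corner: every restriction to an `n`-face containing `0^{n+1}` is a cube. -/
def IsNSCorner {X : Type*} (C : ∀ n, ((Fin n → Bool) → X) → Prop) (n : ℕ)
    (q' : (Fin (n + 1) → Bool) → X) : Prop :=
  ∀ j : Fin (n + 1), C n (lowerFaceRestr q' j)

/-- `q` is a completion of the corner `q'`. -/
def IsNSCompletion {X : Type*} (C : ∀ n, ((Fin n → Bool) → X) → Prop) (n : ℕ)
    (q' q : (Fin (n + 1) → Bool) → X) : Prop :=
  C (n + 1) q ∧ ∀ v : Fin (n + 1) → Bool, v ≠ (fun _ => true) → q v = q' v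

/-- The nilspace axioms: composition, ergodicity and corner completion. -/
def IsNilspace {X : Type*} (C : ∀ n, ((Fin n → Bool) → X) → Prop) : Prop :=
  (∀ (m n : ℕ) (φ : (Fin m → Bool) → (Fin n → Bool)), IsCubeMorphism φ →
      ∀ q, C n q → C m (q ∘ φ)) ∧
  (∀ q : (Fin 1 → Bool) → X, C 1 q) ∧
  (∀ n (q' : (Fin (n + 1) → Bool) → X), IsNSCorner C n q' → ∃ q, IsNSCompletion C n q' q)

/-- A `k`-step nilspace: a nilspace in which every `(k+1)`-corner has a unique
completion. -/
def IsKStepNilspace {X : Type*} (C : ∀ n, ((Fin n → Bool) → X) → Prop) (k : ℕ) : Prop :=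
  IsNilspace C ∧
  ∀ q' : (Fin (k + 1) → Bool) → X, IsNSCorner C k q' → ∃! q, IsNSCompletion C k q' q

/-- The Gray-code alternating product `σ_n`. -/
def graySigma {G : Type*} [Group G] : (n : ℕ) → ((Fin n → Bool) → G) → G
  | 0, g => g (fun i => i.elim0)
  | n + 1, g => (graySigma n (fun v => g (Fin.snoc v true)))⁻¹ *
      graySigma n (fun v => g (Fin.snoc v false))

/-- The difference operator `∂_h g (x) = g(x)⁻¹ g(xh)`. -/
def mulDiff {H G : Type*} [Group H] [Group G] (h : H) (g : H → G) : H → G :=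
  fun x => (g x)⁻¹ * g (x * h)

/-- `g : H → G` is a polynomial map adapted to the filtrations `H_•, G_•`. -/
def IsPolyMap {H G : Type*} [Group H] [Group G] (Hf : ℕ → Subgroup H)
    (Gf : ℕ → Subgroup G) (g : H → G) : Prop :=
  ∀ (n : ℕ) (d : Fin n → ℕ) (h : Fin n → H), (∀ j, h j ∈ Hf (d j)) →
    ∀ x : H, ((List.ofFn h).foldr mulDiff g) x ∈ Gf (∑ j, d j)

/-- The `k`-arrow `⟨q_0, q_1⟩_k : {0,1}^{n+k} → X`. -/
def arrowMap {X : Type*} {n k : ℕ} (q0 q1 : (Fin n → Bool) → X) :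
    (Fin (n + k) → Bool) → X :=
  fun v =>
    if ∀ j : Fin k, v (Fin.natAdd n j) = true
    then q1 (fun i => v (Fin.castAdd k i))
    else q0 (fun i => v (Fin.castAdd k i))

/-! By induction on `k`: since `⟨q₀, q₁⟩_{k+1} = ⟨⟨q₀, q₀⟩_k, ⟨q₀, q₁⟩_k⟩_1` and
`⟨q₀, q₀⟩_k⁻¹ ⟨q₀, q₁⟩_k = ⟨1, q₀⁻¹ q₁⟩_k`, everything reduces to `k = 1`, i.e. to the claim that
`f ∈ C^{n+1}(G_•)` iff its lower slice `f₀` lies in `C^n(G_•)` and `f₀⁻¹ f₁ ∈ C^n(G_•^{+1})`.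

For the forward direction, a face of codimension `c` either does not constrain the last
coordinate (then `f₀ = f₁`) or has the empty set and a face of codimension `c - 1` as its two
slices. This passes to products because `C^n(G_•)` normalizes `C^n(G_•^{+k})`: conjugating
`h^{F'}` by `g^F` multiplies it by `[h, g⁻¹]^{F' ∩ F}`, and `F' ∩ F` has codimension at most
`c + c'`. Conversely `f = ⟨f₀, f₀⟩_1 · ⟨1, f₀⁻¹ f₁⟩_1`, and `⟨1, g^F⟩_1` is the face element of
`F × {1}`, whose codimension is one more than that of `F`.
-/

section Filtration

variable {G : Type*} [Group G] {Gf : ℕ → Subgroup G}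

theorem IsHKFiltration.antitone (hGf : IsHKFiltration Gf) : Antitone Gf :=
  antitone_nat_of_succ_le hGf.1

theorem IsHKFiltration.shift (hGf : IsHKFiltration Gf) (k : ℕ) :
    IsHKFiltration (fun i => Gf (i + k)) :=
  ⟨fun _ => hGf.antitone (by omega), fun i j _ hx _ hy =>
    hGf.antitone (by omega) (hGf.2 (i + k) (j + k) _ hx _ hy)⟩

end Filtration

section Faces

variable {n : ℕ}

theorem IsFaceOfCodim.inter {F₁ F₂ : Set (Fin n → Bool)} {c₁ c₂ : ℕ}
    (h₁ : IsFaceOfCodim F₁ c₁) (h₂ : IsFaceOfCodim F₂ c₂) :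
    F₁ ∩ F₂ = ∅ ∨ ∃ c ≤ c₁ + c₂, IsFaceOfCodim (F₁ ∩ F₂) c := by
  classical
  obtain ⟨I₁, x₁, rfl, rfl⟩ := h₁
  obtain ⟨I₂, x₂, rfl, rfl⟩ := h₂
  by_cases hclash : ∃ i ∈ I₁, i ∈ I₂ ∧ x₁ i ≠ x₂ i
  · obtain ⟨i, hi₁, hi₂, hne⟩ := hclash
    exact Or.inl <| Set.eq_empty_of_forall_notMem fun v hv =>
      hne ((hv.1 i hi₁).symm.trans (hv.2 i hi₂))
  · push Not at hclash
    refine Or.inr ⟨#(I₁ ∪ I₂), card_union_le _ _, I₁ ∪ I₂,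
      fun i => if i ∈ I₁ then x₁ i else x₂ i, rfl, ?_⟩
    ext v
    simp only [Set.mem_inter_iff, Set.mem_ofPred_eq, mem_union]
    constructor
    · rintro ⟨hv₁, hv₂⟩ i hi
      split_ifs with h
      · exact hv₁ i h
      · exact hv₂ i (hi.resolve_left h)
    · intro hv
      refine ⟨fun i hi => by simpa [hi] using hv i (Or.inl hi), fun i hi => ?_⟩
      by_cases h : i ∈ I₁
      · simpa [h, hclash i h hi] using hv i (Or.inl h)
      · simpa [h] using hv i (Or.inr hi)

theorem IsFaceOfCodim.preimage_comp {m c : ℕ} {F : Set (Fin n → Bool)} (hF : IsFaceOfCodim F c)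
    {σ : Fin n → Fin m} (hσ : σ.Injective) :
    IsFaceOfCodim ((fun w => w ∘ σ) ⁻¹' F) c := by
  obtain ⟨I, x, rfl, rfl⟩ := hF
  refine ⟨I.map ⟨σ, hσ⟩, Function.extend σ x (fun _ => false), card_map _, ?_⟩
  ext w
  simp [hσ.extend_apply]

theorem IsFaceOfCodim.setOf_last_eq_true_and_init_mem {c : ℕ} {F : Set (Fin n → Bool)}
    (hF : IsFaceOfCodim F c) :
    IsFaceOfCodim {w : Fin (n + 1) → Bool | w (Fin.last n) = true ∧ Fin.init w ∈ F} (c + 1) := by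
  obtain ⟨I, x, rfl, rfl⟩ := hF
  refine ⟨(I.map Fin.castSuccEmb).cons (Fin.last n) (by simp [Fin.castSucc_ne_last]),
    Fin.snoc x true, by simp, ?_⟩
  ext w
  simp [Fin.init]

theorem card_preimage_castSucc (I : Finset (Fin (n + 1))) :
    #(I.preimage Fin.castSucc (Fin.castSucc_injective n).injOn) = #(I.erase (Fin.last n)) := by
  classical
  rw [card_preimage]
  congr 1
  ext i
  simp only [mem_filter, Set.mem_range, Fin.exists_castSucc_eq, mem_erase]
  exact and_comm

theorem preimage_snoc_face (I : Finset (Fin (n + 1))) (x : Fin (n + 1) → Bool) (b : Bool) :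
    (fun v : Fin n → Bool => (Fin.snoc v b : Fin (n + 1) → Bool)) ⁻¹' {w | ∀ i ∈ I, w i = x i} =
      {_v | Fin.last n ∈ I → b = x (Fin.last n)} ∩
        {v | ∀ i ∈ I.preimage Fin.castSucc (Fin.castSucc_injective n).injOn,
          v i = x i.castSucc} := by
  ext v
  simp only [Set.mem_preimage, Set.mem_inter_iff, Set.mem_ofPred_eq, mem_preimage,
    Fin.forall_fin_succ', Fin.snoc_castSucc, Fin.snoc_last]
  tauto

end Faces

section CubeGroup

variable {G : Type*} [Group G] {Gf : ℕ → Subgroup G} {n : ℕ}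

@[simp]
theorem faceEl_empty (g : G) : faceEl (∅ : Set (Fin n → Bool)) g = 1 := by
  funext v
  simp [faceEl]

theorem faceEl_inv (F : Set (Fin n → Bool)) (g : G) : (faceEl F g)⁻¹ = faceEl F g⁻¹ := by
  funext v
  by_cases hv : v ∈ F <;> simp [faceEl, hv]

theorem faceEl_mem_hkCubes {F : Set (Fin n → Bool)} {c : ℕ} (hF : IsFaceOfCodim F c) {g : G}
    (hg : g ∈ Gf c) : faceEl F g ∈ hkCubes Gf n :=
  Subgroup.subset_closure ⟨c, F, g, hF, hg, rfl⟩

theorem faceEl_mem_hkCubes_of_le (hGf : Antitone Gf) {F : Set (Fin n → Bool)} {c c' : ℕ}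
    (hF : IsFaceOfCodim F c) (hc : c ≤ c') {g : G} (hg : g ∈ Gf c') :
    faceEl F g ∈ hkCubes Gf n :=
  faceEl_mem_hkCubes hF (hGf hc hg)

theorem faceEl_mul_faceEl_mul_inv {F F' : Set (Fin n → Bool)} (g h : G) :
    faceEl F g * faceEl F' h * (faceEl F g)⁻¹ =
      faceEl F' h * faceEl (F' ∩ F) (h⁻¹ * g * h * g⁻¹) := by
  funext v
  by_cases hv : v ∈ F <;> by_cases hv' : v ∈ F' <;> simp [faceEl, hv, hv']
  group

theorem faceEl_mul_faceEl_mul_inv_mem (hGf : IsHKFiltration Gf) {k c c' : ℕ}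
    {F F' : Set (Fin n → Bool)} (hF : IsFaceOfCodim F c) (hF' : IsFaceOfCodim F' c')
    {g h : G} (hg : g ∈ Gf c) (hh : h ∈ Gf (c' + k)) :
    faceEl F g * faceEl F' h * (faceEl F g)⁻¹ ∈ hkCubes (fun i => Gf (i + k)) n := by
  rw [faceEl_mul_faceEl_mul_inv]
  refine mul_mem (faceEl_mem_hkCubes hF' hh) ?_
  rcases hF'.inter hF with hempty | ⟨d, hd, hface⟩
  · simp [hempty]
  · have hcomm := hGf.2 _ _ h hh g⁻¹ (inv_mem hg)
    rw [inv_inv] at hcomm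
    exact faceEl_mem_hkCubes_of_le (hGf.shift k).antitone hface hd (by rwa [add_right_comm])

theorem faceEl_mem_normalizer (hGf : IsHKFiltration Gf) {k c : ℕ} {F : Set (Fin n → Bool)}
    (hF : IsFaceOfCodim F c) {g : G} (hg : g ∈ Gf c) :
    faceEl F g ∈ Subgroup.normalizer (hkCubes (fun i => Gf (i + k)) n) := by
  have hconj : ∀ g ∈ Gf c, ∀ d ∈ hkCubes (fun i => Gf (i + k)) n,
      faceEl F g * d * (faceEl F g)⁻¹ ∈ hkCubes (fun i => Gf (i + k)) n := by
    intro g hg d hd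
    refine (Subgroup.closure_le ((hkCubes _ n).comap (MulAut.conj (faceEl F g)).toMonoidHom)).2
      ?_ hd
    rintro _ ⟨c', F', h, hF', hh, rfl⟩
    exact faceEl_mul_faceEl_mul_inv_mem hGf hF hF' hg hh
  refine Subgroup.mem_normalizer_iff.2 fun d => ⟨hconj g hg d, fun hd => ?_⟩
  simpa [← faceEl_inv, mul_assoc] using hconj g⁻¹ (inv_mem hg) _ hd

theorem hkCubes_le_normalizer (hGf : IsHKFiltration Gf) (k : ℕ) :
    hkCubes Gf n ≤ Subgroup.normalizer (hkCubes (fun i => Gf (i + k)) n) := by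
  refine (Subgroup.closure_le _).2 ?_
  rintro _ ⟨c, F, g, hF, hg, rfl⟩
  exact faceEl_mem_normalizer hGf hF hg

end CubeGroup

section Arrows

variable {X : Type*} {n : ℕ}

def lastSlice (f : (Fin (n + 1) → Bool) → X) (b : Bool) : (Fin n → Bool) → X :=
  fun v => f (Fin.snoc v b)

section Group

variable {G : Type*} [Group G]

@[simp]
theorem lastSlice_one (b : Bool) : lastSlice (1 : (Fin (n + 1) → Bool) → G) b = 1 :=
  rfl

@[simp]
theorem lastSlice_mul (f f' : (Fin (n + 1) → Bool) → G) (b : Bool) :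
    lastSlice (f * f') b = lastSlice f b * lastSlice f' b :=
  rfl

@[simp]
theorem lastSlice_inv (f : (Fin (n + 1) → Bool) → G) (b : Bool) :
    lastSlice f⁻¹ b = (lastSlice f b)⁻¹ :=
  rfl

end Group

theorem arrowMap_one_apply (q0 q1 : (Fin n → Bool) → X) (w : Fin (n + 1) → Bool) :
    arrowMap (k := 1) q0 q1 w = if w (Fin.last n) then q1 (Fin.init w) else q0 (Fin.init w) := by
  simp only [arrowMap, Fin.forall_fin_one, ← Fin.last_zero, Fin.natAdd_last]
  rfl

@[simp]
theorem lastSlice_arrowMap_false (q0 q1 : (Fin n → Bool) → X) :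
    lastSlice (arrowMap (k := 1) q0 q1) false = q0 := by
  funext v
  simp [lastSlice, arrowMap_one_apply]

@[simp]
theorem lastSlice_arrowMap_true (q0 q1 : (Fin n → Bool) → X) :
    lastSlice (arrowMap (k := 1) q0 q1) true = q1 := by
  funext v
  simp [lastSlice, arrowMap_one_apply]

theorem arrowMap_self {k : ℕ} (q : (Fin n → Bool) → X) :
    arrowMap (k := k) q q = fun w => q (w ∘ Fin.castAdd k) := by
  funext w
  simp [arrowMap, Function.comp_def]

theorem arrowMap_succ {k : ℕ} (q0 q1 : (Fin n → Bool) → X) :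
    arrowMap (k := k + 1) q0 q1 =
      arrowMap (k := 1) (arrowMap (k := k) q0 q0) (arrowMap (k := k) q0 q1) := by
  funext w
  have hcond : (∀ j : Fin (k + 1), w (Fin.natAdd n j) = true) ↔
      w (Fin.last (n + k)) = true ∧ ∀ j : Fin k, Fin.init w (Fin.natAdd n j) = true := by
    rw [Fin.forall_fin_succ', and_comm]
    rfl
  rw [arrowMap_one_apply, arrowMap, arrowMap, arrowMap, if_congr hcond rfl rfl, ite_and, ite_self]
  rfl

variable {G : Type*} [Group G] {k : ℕ}

theorem arrowMap_mul (q0 q1 p0 p1 : (Fin n → Bool) → G) :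
    arrowMap (k := k) (q0 * p0) (q1 * p1) = arrowMap q0 q1 * arrowMap p0 p1 := by
  funext w
  simp only [arrowMap, Pi.mul_apply]
  split_ifs <;> rfl

theorem arrowMap_inv (q0 q1 : (Fin n → Bool) → G) :
    arrowMap (k := k) q0⁻¹ q1⁻¹ = (arrowMap q0 q1)⁻¹ := by
  funext w
  simp only [arrowMap, Pi.inv_apply]
  split_ifs <;> rfl

end Arrows

section LastCoordinate

variable {G : Type*} [Group G] {Gf : ℕ → Subgroup G} {n : ℕ}

theorem comp_mem_hkCubes {m : ℕ} {σ : Fin n → Fin m} (hσ : σ.Injective)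
    {q : (Fin n → Bool) → G} (hq : q ∈ hkCubes Gf n) :
    (fun w => q (w ∘ σ)) ∈ hkCubes Gf m := by
  induction hq using Subgroup.closure_induction with
  | mem _ hs =>
    obtain ⟨c, F, g, hF, hg, rfl⟩ := hs
    exact faceEl_mem_hkCubes (hF.preimage_comp hσ) hg
  | one => exact one_mem _
  | mul _ _ _ _ hx hy => exact mul_mem hx hy
  | inv _ _ hx => exact inv_mem hx

theorem arrowMap_one_left_faceEl (F : Set (Fin n → Bool)) (g : G) :
    arrowMap (k := 1) 1 (faceEl F g) =
      faceEl {w : Fin (n + 1) → Bool | w (Fin.last n) = true ∧ Fin.init w ∈ F} g := by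
  funext w
  rw [arrowMap_one_apply]
  by_cases hw : w (Fin.last n) = true <;> by_cases hF : Fin.init w ∈ F <;> simp [faceEl, hw, hF]

theorem arrowMap_one_left_mem_hkCubes {d : (Fin n → Bool) → G}
    (hd : d ∈ hkCubes (fun i => Gf (i + 1)) n) : arrowMap (k := 1) 1 d ∈ hkCubes Gf (n + 1) := by
  induction hd using Subgroup.closure_induction with
  | mem _ hs =>
    obtain ⟨c, F, g, hF, hg, rfl⟩ := hs
    rw [arrowMap_one_left_faceEl]
    exact faceEl_mem_hkCubes hF.setOf_last_eq_true_and_init_mem hg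
  | one =>
    rw [arrowMap_self]
    exact one_mem _
  | mul _ _ _ _ hx hy => simpa [← arrowMap_mul] using mul_mem hx hy
  | inv _ _ hx => simpa [← arrowMap_inv] using inv_mem hx

theorem lastSlice_faceEl (F : Set (Fin (n + 1) → Bool)) (g : G) (b : Bool) :
    lastSlice (faceEl F g) b = faceEl ((fun v => Fin.snoc v b) ⁻¹' F) g :=
  rfl

theorem lastSlice_faceEl_mem_hkCubes (hGf : Antitone Gf) {F : Set (Fin (n + 1) → Bool)} {c : ℕ}
    (hF : IsFaceOfCodim F c) {g : G} (hg : g ∈ Gf c) :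
    lastSlice (faceEl F g) false ∈ hkCubes Gf n ∧
      (lastSlice (faceEl F g) false)⁻¹ * lastSlice (faceEl F g) true ∈
        hkCubes (fun i => Gf (i + 1)) n := by
  obtain ⟨I, x, rfl, rfl⟩ := hF
  simp only [lastSlice_faceEl, preimage_snoc_face]
  set F' := {v : Fin n → Bool |
    ∀ i ∈ I.preimage Fin.castSucc (Fin.castSucc_injective n).injOn, v i = x i.castSucc}
  have hF' : IsFaceOfCodim F' #(I.erase (Fin.last n)) := ⟨_, _, card_preimage_castSucc I, rfl⟩
  by_cases hlast : Fin.last n ∈ I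
  · have hg' : g ∈ Gf (#(I.erase (Fin.last n)) + 1) := by rwa [card_erase_add_one hlast]
    cases hx : x (Fin.last n)
    · simpa [hlast, hx, faceEl_inv] using ⟨faceEl_mem_hkCubes hF' (hGf (by omega) hg'),
        faceEl_mem_hkCubes (Gf := fun i => Gf (i + 1)) hF' (inv_mem hg')⟩
    · simpa [hlast, hx] using faceEl_mem_hkCubes (Gf := fun i => Gf (i + 1)) hF' hg'
  · simpa [hlast] using faceEl_mem_hkCubes_of_le hGf hF' card_erase_le hg

theorem lastSlice_mem_hkCubes (hGf : IsHKFiltration Gf) {f : (Fin (n + 1) → Bool) → G}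
    (hf : f ∈ hkCubes Gf (n + 1)) :
    lastSlice f false ∈ hkCubes Gf n ∧
      (lastSlice f false)⁻¹ * lastSlice f true ∈ hkCubes (fun i => Gf (i + 1)) n := by
  induction hf using Subgroup.closure_induction with
  | mem _ hs =>
    obtain ⟨c, F, g, hF, hg, rfl⟩ := hs
    exact lastSlice_faceEl_mem_hkCubes hGf.antitone hF hg
  | one => simp
  | mul x y _ _ hx hy =>
    -- `(xy)₀⁻¹ (xy)₁ = y₀⁻¹ (x₀⁻¹ x₁) y₀ · y₀⁻¹ y₁`, and `y₀` normalizes the shifted cube group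
    have hconj := (Subgroup.mem_normalizer_iff''.1 (hkCubes_le_normalizer hGf 1 hy.1) _).1 hx.2
    refine ⟨mul_mem hx.1 hy.1, ?_⟩
    convert mul_mem hconj hy.2 using 1
    simp only [lastSlice_mul]
    group
  | inv x _ hx =>
    have hconj := (Subgroup.mem_normalizer_iff.1 (hkCubes_le_normalizer hGf 1 hx.1) _).1
      (inv_mem hx.2)
    refine ⟨inv_mem hx.1, ?_⟩
    convert hconj using 1
    simp only [lastSlice_inv]
    group

theorem arrowMap_one_mem_hkCubes_iff (hGf : IsHKFiltration Gf) (q0 q1 : (Fin n → Bool) → G) :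
    arrowMap (k := 1) q0 q1 ∈ hkCubes Gf (n + 1) ↔
      q0 ∈ hkCubes Gf n ∧ q0⁻¹ * q1 ∈ hkCubes (fun i => Gf (i + 1)) n := by
  refine ⟨fun h => by simpa using lastSlice_mem_hkCubes hGf h, fun ⟨h0, hd⟩ => ?_⟩
  have hsplit : arrowMap (k := 1) q0 q1 = arrowMap q0 q0 * arrowMap 1 (q0⁻¹ * q1) := by
    rw [← arrowMap_mul, mul_one, mul_inv_cancel_left]
  rw [hsplit, arrowMap_self]
  exact mul_mem (comp_mem_hkCubes (Fin.castAdd_injective n 1) h0)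
    (arrowMap_one_left_mem_hkCubes hd)

end LastCoordinate

theorem stmt12 {G : Type*} [Group G] (Gf : ℕ → Subgroup G) (hGf : IsHKFiltration Gf)
    {n k : ℕ} (hk : 1 ≤ k) (q0 q1 : (Fin n → Bool) → G) :
    arrowMap (k := k) q0 q1 ∈ hkCubes Gf (n + k) ↔
      q0 ∈ hkCubes Gf n ∧
      (fun v => (q0 v)⁻¹ * q1 v) ∈ hkCubes (fun i => Gf (i + k)) n := by
  induction k, hk using Nat.le_induction generalizing Gf q0 q1 with
  | base => exact arrowMap_one_mem_hkCubes_iff hGf q0 q1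
  | succ k _ ih =>
    have hlower : arrowMap (k := k) q0 q0 ∈ hkCubes Gf (n + k) ↔ q0 ∈ hkCubes Gf n := by
      refine (ih Gf hGf q0 q0).trans (and_iff_left ?_)
      simp only [inv_mul_cancel]
      exact one_mem _
    have hupper : arrowMap (k := k) 1 (q0⁻¹ * q1) ∈ hkCubes (fun i => Gf (i + 1)) (n + k) ↔
        (fun v => (q0 v)⁻¹ * q1 v) ∈ hkCubes (fun i => Gf (i + (k + 1))) n := by
      refine (ih _ (hGf.shift 1) 1 (q0⁻¹ * q1)).trans ((and_iff_right (one_mem _)).trans ?_)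
      simp only [Pi.one_apply, inv_one, one_mul]
      rfl
    rw [arrowMap_succ]
    show arrowMap (k := 1) _ _ ∈ hkCubes Gf (n + k + 1) ↔ _
    rw [arrowMap_one_mem_hkCubes_iff hGf, ← arrowMap_inv, ← arrowMap_mul, inv_mul_cancel, hlower,
      hupper]
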